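/- For every integer k ≥ 1, the series (2⁷/π⁴) ∑_{j ≥ 1, j and k of opposite parity} k²j²/(k²-j²)⁵ converges and equals 1/(24k²) - 5/(8π²k⁴). -/

import Mathlib

/-!
Write `j = k + (2m + 1)` with `m ∈ ℤ`. The summand is even in `j` and vanishes at `j = 0`, so the
series is half of the corresponding sum over all `m ∈ ℤ`. Partial fractions express
`k²j²/(k² - j²)⁵` through the powers `p ≤ 5` of `1/(j - k) = 1/(2m + 1)` and
`1/(j + k) = 1/(2(m + k) + 1)`. A sum over `ℤ` is invariant under `m ↦ m + k`, so the odd-order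
poles, which enter as differences, contribute nothing (for `p = 1` by telescoping), while the
even-order ones contribute `2 ∑ (2m + 1)⁻² = π²/2` and `2 ∑ (2m + 1)⁻⁴ = π⁴/24`.
-/

open Real Filter Topology

section Telescoping

variable {G : Type*}

theorem hasSum_sub_succ_of_tendsto [AddCommGroup G] [TopologicalSpace G] [IsTopologicalAddGroup G]
    [T2Space G] {f : ℕ → G} {l : G} (hf : Tendsto f atTop (𝓝 l))
    (hs : Summable fun n => f (n + 1) - f n) :
    HasSum (fun n => f (n + 1) - f n) (l - f 0) := by
  obtain ⟨S, hS⟩ := hs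
  have hpartial : Tendsto (fun n => ∑ i ∈ Finset.range n, (f (i + 1) - f i)) atTop
      (𝓝 (l - f 0)) := by
    simpa only [Finset.sum_range_sub] using hf.sub_const (f 0)
  rwa [tendsto_nhds_unique hS.tendsto_sum_nat hpartial] at hS

variable [NormedAddCommGroup G] [CompleteSpace G] {g : ℤ → G}

theorem hasSum_int_sub_succ_of_tendsto (htop : Tendsto g atTop (𝓝 0))
    (hbot : Tendsto g atBot (𝓝 0)) (hs : Summable fun m => g (m + 1) - g m) :
    HasSum (fun m => g (m + 1) - g m) 0 := by
  have hpos : HasSum (fun n : ℕ => g (n + 1) - g n) (0 - g 0) := by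
    have hs_nat : Summable fun n : ℕ => g (n + 1) - g n := hs.comp_injective Nat.cast_injective
    simpa using hasSum_sub_succ_of_tendsto (f := fun n : ℕ => g n)
      (htop.comp tendsto_natCast_atTop_atTop) (by simpa using hs_nat)
  have hneg : HasSum (fun n : ℕ => g (-(n + 1) + 1) - g (-(n + 1))) (-(0 - g 0)) := by
    have hs_neg : Summable fun n : ℕ => g (-(n + 1) + 1) - g (-(n + 1)) :=
      (hs.comp_injective @Int.negSucc.inj).congr fun n => by simp [Int.negSucc_eq]
    have := hasSum_sub_succ_of_tendsto (f := fun n : ℕ => g (-n))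
      (hbot.comp (tendsto_neg_atTop_atBot.comp tendsto_natCast_atTop_atTop))
      (hs_neg.neg.congr fun n => by rw [neg_sub]; push_cast; ring_nf)
    exact this.neg.congr_fun fun n => by rw [neg_sub]; push_cast; ring_nf
  exact add_neg_cancel (0 - g 0) ▸ hpos.of_nat_of_neg_add_one hneg

theorem hasSum_int_sub_add_of_tendsto (htop : Tendsto g atTop (𝓝 0))
    (hbot : Tendsto g atBot (𝓝 0)) (hs : Summable fun m => g (m + 1) - g m) (c : ℕ) :
    HasSum (fun m => g (m + c) - g m) 0 := by
  induction c with
  | zero => simp [hasSum_zero]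
  | succ c ih =>
    have hstep := (Equiv.addRight (c : ℤ)).hasSum_iff.mpr
      (hasSum_int_sub_succ_of_tendsto htop hbot hs)
    convert hstep.add ih using 1
    · ext m
      simp only [Function.comp_apply, Equiv.coe_addRight, Nat.cast_add, Nat.cast_one]
      rw [add_assoc, add_comm (c : ℤ) 1, ← add_assoc]
      abel
    · simp

end Telescoping

noncomputable def oddInvPow (p : ℕ) (m : ℤ) : ℝ := 1 / (2 * (m : ℝ) + 1) ^ p

lemma two_mul_intCast_add_one_ne_zero (m : ℤ) : 2 * (m : ℝ) + 1 ≠ 0 := by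
  exact_mod_cast (by omega : 2 * m + 1 ≠ 0)

lemma summable_oddInvPow {p : ℕ} (hp : 2 ≤ p) : Summable (oddInvPow p) := by
  have hinj : Function.Injective fun m : ℤ => 2 * m + 1 := fun a b h => by simp only at h; omega
  refine ((summable_one_div_int_pow.mpr hp).comp_injective hinj).congr fun m => ?_
  simp [oddInvPow]

lemma hasSum_one_div_two_mul_add_one_pow {p : ℕ} {T : ℝ}
    (hT : HasSum (fun n : ℕ => 1 / (n : ℝ) ^ p) T) :
    HasSum (fun n : ℕ => 1 / (2 * (n : ℝ) + 1) ^ p) ((1 - 1 / 2 ^ p) * T) := by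
  have hodd : Summable fun n : ℕ => 1 / ((2 * n + 1 : ℕ) : ℝ) ^ p :=
    hT.summable.comp_injective fun a b h => by simpa using h
  have heven : HasSum (fun n : ℕ => 1 / ((2 * n : ℕ) : ℝ) ^ p) (1 / 2 ^ p * T) :=
    (hT.mul_left _).congr_fun fun n => by push_cast; rw [mul_pow, one_div_mul_one_div]
  have hT' := hT.unique (heven.even_add_odd hodd.hasSum)
  convert hodd.hasSum using 1
  · simp
  · linear_combination hT'

lemma hasSum_oddInvPow_of_even {p : ℕ} (hp : Even p) {T : ℝ}
    (hT : HasSum (fun n : ℕ => 1 / (n : ℝ) ^ p) T) :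
    HasSum (oddInvPow p) (2 * ((1 - 1 / 2 ^ p) * T)) := by
  have h := hasSum_one_div_two_mul_add_one_pow hT
  rw [two_mul]
  refine HasSum.of_nat_of_neg_add_one (h.congr_fun fun n => by simp [oddInvPow])
    (h.congr_fun fun n => ?_)
  simp only [oddInvPow]
  push_cast
  rw [show 2 * (-((n : ℝ) + 1)) + 1 = -(2 * n + 1) by ring, hp.neg_pow]

lemma summable_oddInvPow_one_sub_succ :
    Summable fun m => oddInvPow 1 (m + 1) - oddInvPow 1 m := by
  have h2 := summable_oddInvPow le_rfl
  refine Summable.of_norm_bounded (h2.add ((Equiv.addRight 1).summable_iff.mpr h2)) fun m => ?_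
  set a := oddInvPow 1 m
  set b := oddInvPow 1 (m + 1)
  -- AM-GM: `|b - a| = 2 |a b| ≤ a² + b²`
  have hab : b - a = -2 * (a * b) := by
    simp only [a, b, oddInvPow]
    push_cast
    have hu := two_mul_intCast_add_one_ne_zero m
    have hv := two_mul_intCast_add_one_ne_zero (m + 1)
    push_cast at hv
    field_simp
    ring
  have hsq : ∀ n, oddInvPow 2 n = oddInvPow 1 n ^ 2 := fun n => by simp [oddInvPow]
  simp only [Function.comp_apply, Equiv.coe_addRight, hsq, Real.norm_eq_abs, hab]
  rw [abs_le]
  constructor <;> nlinarith [sq_nonneg (a + b), sq_nonneg (a - b)]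

lemma hasSum_oddInvPow_one_shift_sub (k : ℕ) :
    HasSum (fun m => oddInvPow 1 (m + k) - oddInvPow 1 m) 0 := by
  have htop : Tendsto (oddInvPow 1) atTop (𝓝 0) := by
    refine (tendsto_inv_atTop_zero.comp (tendsto_atTop_add_const_right _ 1
      (tendsto_intCast_atTop_atTop.const_mul_atTop two_pos))).congr fun m => ?_
    simp [oddInvPow]
  have hbot : Tendsto (oddInvPow 1) atBot (𝓝 0) := by
    refine (tendsto_inv_atBot_zero.comp (tendsto_atBot_add_const_right _ 1
      (((tendsto_intCast_atBot_iff (R := ℝ)).2 tendsto_id).const_mul_atBot two_pos))).congr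
      fun m => ?_
    simp [oddInvPow]
  exact hasSum_int_sub_add_of_tendsto htop hbot summable_oddInvPow_one_sub_succ k

lemma hasSum_oddInvPow_shift_sub {p : ℕ} (hp : 1 ≤ p) (k : ℕ) :
    HasSum (fun m => oddInvPow p (m + k) - oddInvPow p m) 0 := by
  obtain rfl | hp := hp.eq_or_lt
  · exact hasSum_oddInvPow_one_shift_sub k
  · have h := (summable_oddInvPow hp).hasSum
    simpa using ((Equiv.addRight (k : ℤ)).hasSum_iff.mpr h).sub h

lemma sq_mul_sq_div_sub_pow_five_eq {K x : ℝ} (hK : K ≠ 0) (hu : x - K ≠ 0) (hv : x + K ≠ 0) :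
    K ^ 2 * x ^ 2 / (K ^ 2 - x ^ 2) ^ 5 =
      -5 / (256 * K ^ 5) * (1 / (x + K) - 1 / (x - K))
      - 5 / (256 * K ^ 4) * (1 / (x - K) ^ 2 + 1 / (x + K) ^ 2)
      - 1 / (128 * K ^ 3) * (1 / (x + K) ^ 3 - 1 / (x - K) ^ 3)
      + 1 / (64 * K ^ 2) * (1 / (x - K) ^ 4 + 1 / (x + K) ^ 4)
      + 1 / (32 * K) * (1 / (x + K) ^ 5 - 1 / (x - K) ^ 5) := by
  rw [show K ^ 2 - x ^ 2 = -((x - K) * (x + K)) by ring]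
  field_simp
  ring

lemma hasSum_int_sq_mul_sq_div_sub_pow_five {k : ℕ} (hk : 1 ≤ k) :
    HasSum
      (fun m : ℤ => (k : ℝ) ^ 2 * (k + 2 * m + 1) ^ 2 / ((k : ℝ) ^ 2 - (k + 2 * m + 1) ^ 2) ^ 5)
      (π ^ 4 / (1536 * (k : ℝ) ^ 2) - 5 * π ^ 2 / (512 * (k : ℝ) ^ 4)) := by
  have hK : (k : ℝ) ≠ 0 := by positivity
  have hsum2 := hasSum_oddInvPow_of_even even_two hasSum_zeta_two
  have hsum4 := hasSum_oddInvPow_of_even (by decide) hasSum_zeta_four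
  have hshift {p : ℕ} {c : ℝ} (h : HasSum (oddInvPow p) c) :
      HasSum (fun m => oddInvPow p m + oddInvPow p (m + k)) (2 * c) :=
    two_mul c ▸ h.add ((Equiv.addRight (k : ℤ)).hasSum_iff.mpr h)
  have hpieces := ((hasSum_oddInvPow_shift_sub le_rfl k).mul_left (-5 / (256 * (k : ℝ) ^ 5))
    |>.sub ((hshift hsum2).mul_left (5 / (256 * (k : ℝ) ^ 4)))
    |>.sub ((hasSum_oddInvPow_shift_sub (p := 3) (by norm_num) k).mul_left
      (1 / (128 * (k : ℝ) ^ 3)))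
    |>.add ((hshift hsum4).mul_left (1 / (64 * (k : ℝ) ^ 2)))
    |>.add ((hasSum_oddInvPow_shift_sub (p := 5) (by norm_num) k).mul_left
      (1 / (32 * (k : ℝ)))))
  have hpartial : ∀ m : ℤ,
      (k : ℝ) ^ 2 * (k + 2 * m + 1) ^ 2 / ((k : ℝ) ^ 2 - (k + 2 * m + 1) ^ 2) ^ 5 =
      -5 / (256 * (k : ℝ) ^ 5) * (oddInvPow 1 (m + k) - oddInvPow 1 m)
      - 5 / (256 * (k : ℝ) ^ 4) * (oddInvPow 2 m + oddInvPow 2 (m + k))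
      - 1 / (128 * (k : ℝ) ^ 3) * (oddInvPow 3 (m + k) - oddInvPow 3 m)
      + 1 / (64 * (k : ℝ) ^ 2) * (oddInvPow 4 m + oddInvPow 4 (m + k))
      + 1 / (32 * (k : ℝ)) * (oddInvPow 5 (m + k) - oddInvPow 5 m) := fun m => by
    have hu := two_mul_intCast_add_one_ne_zero m
    have hv := two_mul_intCast_add_one_ne_zero (m + k)
    push_cast at hv
    rw [sq_mul_sq_div_sub_pow_five_eq hK (by convert hu using 1; ring)
      (by convert hv using 1; ring)]
    simp only [oddInvPow]
    push_cast
    ring_nf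
  refine Eq.subst (motive := HasSum _) ?_ (hpieces.congr_fun hpartial)
  field_simp
  ring

lemma hasSum_indicator_of_hasSum_int_of_even {φ : ℝ → ℝ} (hφ : φ.Even) (hφ0 : φ 0 = 0) (c : ℤ)
    {S : ℝ} (h : HasSum (fun m : ℤ => φ (c + 2 * m + 1)) (2 * S)) :
    HasSum ({m : ℤ | 0 < c + 2 * m + 1}.indicator fun m => φ (c + 2 * m + 1)) S := by
  set ψ : ℤ → ℝ := fun m => φ (c + 2 * m + 1)
  set s : Set ℤ := {m | 0 < c + 2 * m + 1}
  -- `σ` reflects `c + 2m + 1` to its negative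
  let σ : ℤ ≃ ℤ := (Equiv.neg ℤ).trans (Equiv.subRight (c + 1))
  have hσ : ∀ m, ψ (σ m) = ψ m := fun m => by
    simp only [ψ, σ, Equiv.trans_apply, Equiv.neg_apply, Equiv.subRight_apply]
    push_cast
    rw [← hφ]
    ring_nf
  have hfold : ∀ m, ψ m = s.indicator ψ m + s.indicator ψ (σ m) := fun m => by
    rcases lt_trichotomy 0 (c + 2 * m + 1) with hpos | hzero | hneg
    · rw [Set.indicator_of_mem (by exact hpos), Set.indicator_of_notMem (by simp [s, σ]; omega),
        add_zero]
    · rw [Set.indicator_of_notMem (by simp [s]; omega),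
        Set.indicator_of_notMem (by simp [s, σ]; omega), add_zero]
      simp only [ψ]
      rw [show (c : ℝ) + 2 * m + 1 = 0 by exact_mod_cast hzero.symm, hφ0]
    · rw [Set.indicator_of_notMem (by simp [s]; omega),
        Set.indicator_of_mem (by simp [s, σ]; omega), hσ, zero_add]
  have hs := h.summable.indicator s
  have h2 : HasSum ψ (2 * ∑' m, s.indicator ψ m) := by
    rw [two_mul]
    exact (hs.hasSum.add (σ.hasSum_iff.mpr hs.hasSum)).congr_fun hfold
  rw [show S = ∑' m, s.indicator ψ m by linarith [h.unique h2]]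
  exact hs.hasSum

theorem hasSum_subtype_of_hasSum_int_of_even {φ : ℝ → ℝ} (hφ : φ.Even) (hφ0 : φ 0 = 0) (k : ℕ)
    {S : ℝ} (h : HasSum (fun m : ℤ => φ (k + 2 * m + 1)) (2 * S)) :
    HasSum (fun j : {j : ℕ // 1 ≤ j ∧ Odd (j + k)} => φ j) S := by
  have hind := hasSum_indicator_of_hasSum_int_of_even hφ hφ0 k (by exact_mod_cast h)
  let ι : {j : ℕ // 1 ≤ j ∧ Odd (j + k)} → ℤ := fun j => ((j : ℤ) - k - 1) / 2
  have hιj : ∀ j, (k : ℤ) + 2 * ι j + 1 = j := fun ⟨j, _, ⟨r, hr⟩⟩ => by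
    simp only [ι]
    omega
  have hι : Function.Injective ι := fun i j hij => by
    have := hιj i
    rw [hij, hιj j] at this
    exact Subtype.ext (by exact_mod_cast this.symm)
  have hrange : ∀ m ∉ Set.range ι,
      {m : ℤ | 0 < k + 2 * m + 1}.indicator (fun m => φ ((k : ℤ) + 2 * m + 1)) m = 0 := by
    intro m hm
    refine Set.indicator_of_notMem (fun hpos => hm ?_) _
    change 0 < (k : ℤ) + 2 * m + 1 at hpos
    refine ⟨⟨((k : ℤ) + 2 * m + 1).toNat, by omega, Nat.odd_iff.mpr (by omega)⟩, ?_⟩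
    simp only [ι]
    omega
  refine ((hι.hasSum_iff hrange).mpr hind).congr_fun fun j => ?_
  have hmem : ι j ∈ {m : ℤ | 0 < k + 2 * m + 1} := by
    change 0 < (k : ℤ) + 2 * ι j + 1
    rw [hιj j]
    exact_mod_cast j.2.1
  rw [Function.comp_apply, Set.indicator_of_mem hmem]
  exact congrArg φ (by exact_mod_cast (hιj j).symm)

/-- The second-order perturbation coefficient of the `k`-th eigenvalue:
`(2⁷/π⁴) ∑_{j ≥ 1, parity opposite to k} k²j²/(k²-j²)⁵ = 1/(24k²) - 5/(8π²k⁴)`. -/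
theorem stmt8 (k : ℕ) (hk : 1 ≤ k) :
    HasSum
      (fun j : {j : ℕ // 1 ≤ j ∧ Odd (j + k)} =>
        2 ^ 7 / Real.pi ^ 4 *
          ((k : ℝ) ^ 2 * ((j : ℕ) : ℝ) ^ 2 / ((k : ℝ) ^ 2 - ((j : ℕ) : ℝ) ^ 2) ^ 5))
      (1 / (24 * (k : ℝ) ^ 2) - 5 / (8 * Real.pi ^ 2 * (k : ℝ) ^ 4)) := by
  refine hasSum_subtype_of_hasSum_int_of_even
    (φ := fun x => 2 ^ 7 / π ^ 4 * ((k : ℝ) ^ 2 * x ^ 2 / ((k : ℝ) ^ 2 - x ^ 2) ^ 5))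
    (fun x => by simp only [neg_sq]) (by simp) k ?_
  refine Eq.subst (motive := HasSum _) ?_
    ((hasSum_int_sq_mul_sq_div_sub_pow_five hk).mul_left (2 ^ 7 / π ^ 4))
  field_simp
  ring
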